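/- arXiv:2207.08065 — 2 statements merged into one kernel-verified Lean document; each statement's English description precedes it below -/
import Mathlib

section
/- Let $(b_1,\ldots,b_N)$ and $(b'_1,\ldots,b'_N)$ be the recursively defined integer vectors (via $b_t = d_t + \lambda(h_{i_t}) - \sum_{l=t}^{N-1} b_{l+1}a_{i_t,i_{l+1}}$) associated to exponent vectors $(d_1,\ldots,d_N)$ and $(d'_1,\ldots,d'_N)$ respectively, where $d'_l = d_l$ for $l<j$ or $l>j^+$, $d'_j = d_j - 1$, $d'_{j^+} = d_{j^+}-1$, $d'_l = d_l - a_{i_l,i_j}$ for $j<l<j^+$, and $i_j = i_{j^+}$ with no index $l$ strictly between $j$ and $j^+$ satisfying $i_l = i_j$. Then $b'_l = b_l$ for $l\notin\{j,j^+\}$, $b'_j = b_j + 1$, and $b'_{j^+} = b_{j^+} - 1$. -/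
open Finset

/-- mutation of the `b`-vector under division by `A_j`.  If the exponent
vectors `d, d'` are related by `d'_j = d_j - 1`, `d'_{j⁺} = d_{j⁺} - 1`,
`d'_l = d_l - a_{i_l,i_j}` for `j < l < j⁺` and `d'_l = d_l` otherwise (where `j⁺` is the
next occurrence of the letter `i_j`), then the recursively defined `b`-vectors satisfy
`b'_j = b_j + 1`, `b'_{j⁺} = b_{j⁺} - 1` and `b'_l = b_l` otherwise. -/
theorem stmt17 {ι : Type*} (a : ι → ι → ℤ) (ha : ∀ p, a p p = 2)
    (N : ℕ) (i : ℕ → ι) (lamh : ι → ℤ)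
    (d d' b b' : ℕ → ℤ)
    (hb : ∀ t, 1 ≤ t → t ≤ N →
      b t = d t + lamh (i t) - ∑ l ∈ Finset.Ico t N, b (l + 1) * a (i t) (i (l + 1)))
    (hb' : ∀ t, 1 ≤ t → t ≤ N →
      b' t = d' t + lamh (i t) - ∑ l ∈ Finset.Ico t N, b' (l + 1) * a (i t) (i (l + 1)))
    (j jp : ℕ) (hj : 1 ≤ j) (hlt : j < jp) (hjp : jp ≤ N)
    (hsame : i jp = i j)
    (hbetween : ∀ l, j < l → l < jp → i l ≠ i j)
    (hd'j : d' j = d j - 1) (hd'jp : d' jp = d jp - 1)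
    (hd'mid : ∀ l, j < l → l < jp → d' l = d l - a (i l) (i j))
    (hd'out : ∀ l, 1 ≤ l → l ≤ N → (l < j ∨ jp < l) → d' l = d l) :
    (∀ l, 1 ≤ l → l ≤ N → l ≠ j → l ≠ jp → b' l = b l) ∧
    b' j = b j + 1 ∧ b' jp = b jp - 1 := by
  classical
  set c : ℕ → ℤ := fun t => if t = j then 1 else if t = jp then -1 else 0 with hc
  have cval : ∀ t, c t = if t = j then 1 else if t = jp then -1 else 0 := fun _ => rfl
  have main : ∀ t, 1 ≤ t → t ≤ N → (∀ s, t < s → s ≤ N → b' s - b s = c s) →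
      b' t - b t = c t := by
    intro t h1 h2 ih
    have hb1 := hb t h1 h2
    have hb1' := hb' t h1 h2
    have hsum : ∑ l ∈ Finset.Ico t N, b' (l + 1) * a (i t) (i (l + 1))
        - ∑ l ∈ Finset.Ico t N, b (l + 1) * a (i t) (i (l + 1))
        = (if j - 1 ∈ Finset.Ico t N then a (i t) (i j) else 0)
          + (if jp - 1 ∈ Finset.Ico t N then -a (i t) (i jp) else 0) := by
      rw [← Finset.sum_sub_distrib]
      have step : ∀ l ∈ Finset.Ico t N,
          b' (l + 1) * a (i t) (i (l + 1)) - b (l + 1) * a (i t) (i (l + 1))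
          = (if l = j - 1 then a (i t) (i j) else 0)
            + (if l = jp - 1 then -a (i t) (i jp) else 0) := by
        intro l hl
        simp only [Finset.mem_Ico] at hl
        rw [← sub_mul, ih (l + 1) (by omega) (by omega), cval]
        by_cases h1' : l + 1 = j
        · rw [if_pos h1', if_pos (by omega : l = j - 1), if_neg (by omega : l ≠ jp - 1), h1']
          ring
        · by_cases h2' : l + 1 = jp
          · rw [if_neg h1', if_pos h2', if_neg (by omega : l ≠ j - 1),
              if_pos (by omega : l = jp - 1), h2']
            ring
          · rw [if_neg h1', if_neg h2', if_neg (by omega : l ≠ j - 1),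
              if_neg (by omega : l ≠ jp - 1)]
            ring
      rw [Finset.sum_congr rfl step, Finset.sum_add_distrib,
        Finset.sum_ite_eq' (Finset.Ico t N) (j - 1) (fun _ => a (i t) (i j)),
        Finset.sum_ite_eq' (Finset.Ico t N) (jp - 1) (fun _ => -a (i t) (i jp))]
    have hdiff : b' t - b t = (d' t - d t)
        - ((if j - 1 ∈ Finset.Ico t N then a (i t) (i j) else 0)
          + (if jp - 1 ∈ Finset.Ico t N then -a (i t) (i jp) else 0)) := by
      rw [hb1, hb1', ← hsum]; ring
    rw [hdiff, cval]
    rcases lt_trichotomy t j with hcase | hcase | hcase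
    · rw [hd'out t h1 h2 (Or.inl hcase),
        if_pos (by simp only [Finset.mem_Ico]; omega : j - 1 ∈ Finset.Ico t N),
        if_pos (by simp only [Finset.mem_Ico]; omega : jp - 1 ∈ Finset.Ico t N), hsame,
        if_neg (by omega : t ≠ j), if_neg (by omega : t ≠ jp)]
      ring
    · subst hcase
      rw [hd'j, if_neg (by simp only [Finset.mem_Ico]; omega : ¬ t - 1 ∈ Finset.Ico t N),
        if_pos (by simp only [Finset.mem_Ico]; omega : jp - 1 ∈ Finset.Ico t N), hsame,
        ha, if_pos rfl]
      ring
    · rcases lt_trichotomy t jp with hcase2 | hcase2 | hcase2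
      · rw [hd'mid t hcase hcase2,
          if_neg (by simp only [Finset.mem_Ico]; omega : ¬ j - 1 ∈ Finset.Ico t N),
          if_pos (by simp only [Finset.mem_Ico]; omega : jp - 1 ∈ Finset.Ico t N), hsame,
          if_neg (by omega : t ≠ j), if_neg (by omega : t ≠ jp)]
        ring
      · subst hcase2
        rw [hd'jp, if_neg (by simp only [Finset.mem_Ico]; omega : ¬ j - 1 ∈ Finset.Ico t N),
          if_neg (by simp only [Finset.mem_Ico]; omega : ¬ t - 1 ∈ Finset.Ico t N),
          if_neg (by omega : t ≠ j), if_pos rfl]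
        ring
      · rw [hd'out t h1 h2 (Or.inr hcase2),
          if_neg (by simp only [Finset.mem_Ico]; omega : ¬ j - 1 ∈ Finset.Ico t N),
          if_neg (by simp only [Finset.mem_Ico]; omega : ¬ jp - 1 ∈ Finset.Ico t N),
          if_neg (by omega : t ≠ j), if_neg (by omega : t ≠ jp)]
        ring
  have key : ∀ m t, 1 ≤ t → t ≤ N → N ≤ t + m → b' t - b t = c t := by
    intro m
    induction m with
    | zero =>
      intro t h1 h2 h3
      exact main t h1 h2 (fun s hs hs' => absurd hs' (by omega))
    | succ m ih =>
      intro t h1 h2 h3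
      exact main t h1 h2 (fun s hs hs' => ih s (by omega) hs' (by omega))
  refine ⟨fun l h1 h2 hne1 hne2 => ?_, ?_, ?_⟩
  · have h := key N l h1 h2 (by omega)
    rw [cval, if_neg hne1, if_neg hne2] at h
    omega
  · have h := key N j hj (by omega) (by omega)
    rw [cval, if_pos rfl] at h
    omega
  · have h := key N jp (by omega) hjp (by omega)
    rw [cval, if_neg (by omega : jp ≠ j), if_pos rfl] at h
    omega
end

section
/- Let $\mathbf{i}=(i_1,\ldots,i_N)$ be a reduced word of $w_0$, $i\in I$, and $k\in[1,N]$ with $s_{i_N}\cdots s_{i_{k+1}}\alpha_{i_k}=\alpha_i$. Define $b^0_t := \langle h_{i_t},\, s_{i_{t+1}}\cdots s_{i_N}s_i\Lambda_i\rangle$ for $t\in[k+1,N]$, $b^0_k := 0$, and $b^0_t := \langle h_{i_t},\, s_{i_{t+1}}\cdots s_{i_N}\Lambda_i\rangle$ for $t\in[1,k-1]$. Then the vector $(b^0_1,\ldots,b^0_N)$ satisfies the recursion $b^0_t = d_t + (s_i\Lambda_i)(h_{i_t}) - \sum_{l=t}^{N-1} b^0_{l+1}a_{i_t,i_{l+1}}$,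 where $(d_1,\ldots,d_N)$ is the exponent vector of the monomial $t_k$ (i.e. $d_k=1$ and $d_l=0$ for $l\neq k$). -/
namespace Stmt18

open Finset

variable {ι : Type*} {M : Type*} [AddCommGroup M] [Module ℚ M]

/-- The simple reflection `s_j μ = μ - μ(h_j) α_j` on the weight space. -/
def refl (α : ι → M) (h : ι → Module.Dual ℚ M) (j : ι) (μ : M) : M :=
  μ - h j μ • α j

/-- The dual reflection `s_j φ = φ - φ(α_j) h_j` on coroots. -/
def reflD (α : ι → M) (h : ι → Module.Dual ℚ M) (j : ι) (φ : Module.Dual ℚ M) :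
    Module.Dual ℚ M :=
  φ - φ (α j) • h j

/-- `chain α h i N t μ = s_{i_{t+1}} s_{i_{t+2}} ⋯ s_{i_N} μ`. -/
def chain (α : ι → M) (h : ι → Module.Dual ℚ M) (i : ℕ → ι) (N t : ℕ) (μ : M) : M :=
  (List.range' (t + 1) (N - t)).foldr (fun l ν => refl α h (i l) ν) μ

/-- `chainRev α h i N t μ = s_{i_N} s_{i_{N-1}} ⋯ s_{i_{t+1}} μ`. -/
def chainRev (α : ι → M) (h : ι → Module.Dual ℚ M) (i : ℕ → ι) (N t : ℕ) (μ : M) : M :=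
  ((List.range' (t + 1) (N - t)).reverse).foldr (fun l ν => refl α h (i l) ν) μ

/-- `chainD α h i N t φ = s_{i_N} s_{i_{N-1}} ⋯ s_{i_{t+1}} φ` on coroots. -/
def chainD (α : ι → M) (h : ι → Module.Dual ℚ M) (i : ℕ → ι) (N t : ℕ)
    (φ : Module.Dual ℚ M) : Module.Dual ℚ M :=
  ((List.range' (t + 1) (N - t)).reverse).foldr (fun l ψ => reflD α h (i l) ψ) φ

lemma refl_apply (α : ι → M) (h : ι → Module.Dual ℚ M) (φ : Module.Dual ℚ M) (j : ι) (ν : M) :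
    φ (refl α h j ν) = φ ν - h j ν * φ (α j) := by
  simp [refl, smul_eq_mul]

lemma chain_stop (α : ι → M) (h : ι → Module.Dual ℚ M) (i : ℕ → ι) (N t : ℕ) (ht : N ≤ t)
    (ν : M) : chain α h i N t ν = ν := by
  simp [chain, Nat.sub_eq_zero_of_le ht]

lemma chain_step (α : ι → M) (h : ι → Module.Dual ℚ M) (i : ℕ → ι) (N t : ℕ) (ht : t < N)
    (ν : M) : chain α h i N t ν = refl α h (i (t + 1)) (chain α h i N (t + 1) ν) := by
  unfold chain
  have h1 : N - t = (N - (t + 1)) + 1 := by omega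
  rw [h1, List.range'_succ]
  simp

lemma chainRev_step (α : ι → M) (h : ι → Module.Dual ℚ M) (i : ℕ → ι) (N t : ℕ) (ht : t < N)
    (ν : M) : chainRev α h i N t ν = chainRev α h i N (t + 1) (refl α h (i (t + 1)) ν) := by
  unfold chainRev
  have h1 : N - t = (N - (t + 1)) + 1 := by omega
  rw [h1, List.range'_succ]
  simp

lemma chainD_stop (α : ι → M) (h : ι → Module.Dual ℚ M) (i : ℕ → ι) (N t : ℕ) (ht : N ≤ t)
    (φ : Module.Dual ℚ M) : chainD α h i N t φ = φ := by
  simp [chainD, Nat.sub_eq_zero_of_le ht]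

lemma chainD_step (α : ι → M) (h : ι → Module.Dual ℚ M) (i : ℕ → ι) (N t : ℕ) (ht : t < N)
    (φ : Module.Dual ℚ M) :
    chainD α h i N t φ = chainD α h i N (t + 1) (reflD α h (i (t + 1)) φ) := by
  unfold chainD
  have h1 : N - t = (N - (t + 1)) + 1 := by omega
  rw [h1, List.range'_succ]
  simp

lemma chain_sub (α : ι → M) (h : ι → Module.Dual ℚ M) (i : ℕ → ι) (N t : ℕ) (ν ρ : M) :
    chain α h i N t (ν - ρ) = chain α h i N t ν - chain α h i N t ρ := by
  unfold chain
  induction (List.range' (t + 1) (N - t)) with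
  | nil => simp
  | cons a L ih =>
    simp only [List.foldr_cons, ih]
    simp only [refl, map_sub, sub_smul]
    abel

lemma telescope (α : ι → M) (h : ι → Module.Dual ℚ M) (i : ℕ → ι) (N : ℕ)
    (φ : Module.Dual ℚ M) (ν : M) :
    ∀ n t, t + n = N →
      φ (chain α h i N t ν) = φ ν -
        ∑ l ∈ Finset.Ico t N, h (i (l + 1)) (chain α h i N (l + 1) ν) * φ (α (i (l + 1))) := by
  intro n
  induction n with
  | zero =>
    intro t ht
    have hNt : N ≤ t := by omega
    rw [chain_stop α h i N t hNt, show N = t from by omega]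
    simp
  | succ n ih =>
    intro t ht
    have htN : t < N := by omega
    rw [chain_step α h i N t htN, refl_apply, ih (t + 1) (by omega),
      Finset.sum_eq_sum_Ico_succ_bot htN]
    ring

lemma adjoint (α : ι → M) (h : ι → Module.Dual ℚ M) (i : ℕ → ι) (N : ℕ) :
    ∀ n t, t + n = N → ∀ (φ : Module.Dual ℚ M) (ν : M),
      φ (chain α h i N t ν) = (chainD α h i N t φ) ν := by
  intro n
  induction n with
  | zero =>
    intro t ht φ ν
    have : t = N := by omega
    have hNt : N ≤ t := by omega
    rw [chain_stop α h i N t hNt, chainD_stop α h i N t hNt]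
  | succ n ih =>
    intro t ht φ ν
    have htN : t < N := by omega
    rw [chain_step α h i N t htN, chainD_step α h i N t htN]
    rw [← ih (t + 1) (by omega) (reflD α h (i (t + 1)) φ) ν]
    rw [refl_apply]
    simp [reflD]
    ring

lemma refl_refl (α : ι → M) (h : ι → Module.Dual ℚ M) (j : ι) (hαh : h j (α j) = 2) (ν : M) :
    refl α h j (refl α h j ν) = ν := by
  simp only [refl, map_sub, map_smul, hαh, smul_eq_mul, sub_smul, mul_smul]
  module

lemma chain_chainRev (α : ι → M) (h : ι → Module.Dual ℚ M) (i : ℕ → ι) (N : ℕ)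
    (hαh : ∀ j, h j (α j) = 2) :
    ∀ n t, t + n = N → ∀ (ν : M),
      chain α h i N t (chainRev α h i N t ν) = ν := by
  intro n
  induction n with
  | zero =>
    intro t ht ν
    have : t = N := by omega
    have hNt : N ≤ t := by omega
    rw [chain_stop α h i N t hNt]
    simp [chainRev, Nat.sub_eq_zero_of_le hNt]
  | succ n ih =>
    intro t ht ν
    have htN : t < N := by omega
    rw [chainRev_step α h i N t htN, chain_step α h i N t htN,
      ih (t + 1) (by omega), refl_refl α h _ (hαh _)]

/-- the explicitly defined vector
`b⁰_t = ⟨h_{i_t}, s_{i_{t+1}}⋯s_{i_N}s_iΛ_i⟩` for `t > k`, `b⁰_k = 0`,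
`b⁰_t = ⟨h_{i_t}, s_{i_{t+1}}⋯s_{i_N}Λ_i⟩` for `t < k`, satisfies the defining
recursion of the `b`-integers for the exponent vector of the monomial `t_k`
(where `k` satisfies `s_{i_N}⋯s_{i_{k+1}}α_{i_k} = α_i`). -/
theorem stmt18 [DecidableEq ι]
    (α : ι → M) (h : ι → Module.Dual ℚ M) (Λ : ι → M)
    (hαh : ∀ j, h j (α j) = 2)
    (hΛ : ∀ j i0, h j (Λ i0) = if j = i0 then 1 else 0)
    (N : ℕ) (i : ℕ → ι) (i0 : ι) (k : ℕ) (hk1 : 1 ≤ k) (hkN : k ≤ N)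
    (hroot : chainRev α h i N k (α (i k)) = α i0)
    (hrootD : chainD α h i N k (h (i k)) = h i0)
    (b0 : ℕ → ℚ)
    (hb0 : ∀ t, b0 t =
      if t = k then 0
      else if k < t then h (i t) (chain α h i N t (refl α h i0 (Λ i0)))
      else h (i t) (chain α h i N t (Λ i0)))
    (d : ℕ → ℚ) (hdk : ∀ t, d t = if t = k then 1 else 0) :
    ∀ t, 1 ≤ t → t ≤ N →
      b0 t = d t + h (i t) (refl α h i0 (Λ i0)) -
        ∑ l ∈ Finset.Ico t N, b0 (l + 1) * h (i t) (α (i (l + 1))) := by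
  intro t ht1 htN
  set μ := refl α h i0 (Λ i0) with hμdef
  have hμΛ : μ = Λ i0 - α i0 := by
    rw [hμdef]; simp [refl, hΛ]
  have hchainμ : ∀ s, chain α h i N s μ =
      chain α h i N s (Λ i0) - chain α h i N s (α i0) := by
    intro s; rw [hμΛ, chain_sub]
  -- C(k, Λ) = 1
  have hCkΛ : h (i k) (chain α h i N k (Λ i0)) = 1 := by
    rw [adjoint α h i N (N - k) k (by omega), hrootD, hΛ]; simp
  -- C(k, μ) = -1
  have hCkμ : h (i k) (chain α h i N k μ) = -1 := by
    rw [adjoint α h i N (N - k) k (by omega), hrootD, hμΛ]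
    rw [map_sub, hΛ, hαh]; norm_num
  -- chain k (α i0) = α (i k)
  have hchainα : chain α h i N k (α i0) = α (i k) := by
    rw [← hroot, chain_chainRev α h i N hαh (N - k) k (by omega)]
  rcases lt_trichotomy t k with hlt | heq | hgt
  · -- t < k
    rw [hb0 t, if_neg (by omega), if_neg (by omega), hdk t, if_neg (by omega)]
    have T1 := telescope α h i N (h (i t)) (Λ i0) (N - t) t (by omega)
    have T2 := telescope α h i N (h (i t)) (α i0) (N - k) k (by omega)
    rw [hchainα] at T2
    rw [T1]
    -- split both sums at k, and peel off l = k - 1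
    have hk' : k = (k - 1) + 1 := by omega
    have htk1 : t ≤ k - 1 := by omega
    have hsplit : ∀ f : ℕ → ℚ, ∑ l ∈ Finset.Ico t N, f l =
        (∑ l ∈ Finset.Ico t (k - 1), f l + f (k - 1)) + ∑ l ∈ Finset.Ico k N, f l := by
      intro f
      rw [← Finset.sum_Ico_consecutive f (le_of_lt hlt) hkN]
      congr 1
      have hst := Finset.sum_Ico_succ_top htk1 f
      rw [show k - 1 + 1 = k from by omega] at hst
      rw [hst]
    rw [hsplit (fun l => b0 (l + 1) * h (i t) (α (i (l + 1)))),
        hsplit (fun l => h (i (l + 1)) (chain α h i N (l + 1) (Λ i0)) * h (i t) (α (i (l + 1))))]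
    have e1 : ∀ l ∈ Finset.Ico t (k - 1),
        b0 (l + 1) * h (i t) (α (i (l + 1))) =
        h (i (l + 1)) (chain α h i N (l + 1) (Λ i0)) * h (i t) (α (i (l + 1))) := by
      intro l hl
      have hl' := Finset.mem_Ico.mp hl
      rw [hb0 (l + 1), if_neg (by omega), if_neg (by omega)]
    rw [Finset.sum_congr rfl e1]
    have e2 : b0 ((k - 1) + 1) * h (i t) (α (i ((k - 1) + 1))) = 0 := by
      rw [hb0, if_pos (by omega)]; ring
    rw [e2]
    have e3 : ∀ l ∈ Finset.Ico k N,
        b0 (l + 1) * h (i t) (α (i (l + 1))) =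
        h (i (l + 1)) (chain α h i N (l + 1) (Λ i0)) * h (i t) (α (i (l + 1)))
          - h (i (l + 1)) (chain α h i N (l + 1) (α i0)) * h (i t) (α (i (l + 1))) := by
      intro l hl
      have hl' := Finset.mem_Ico.mp hl
      rw [hb0 (l + 1), if_neg (by omega), if_pos (by omega), hchainμ (l + 1), map_sub]
      ring
    rw [Finset.sum_congr rfl e3, Finset.sum_sub_distrib]
    have e4 : h (i ((k - 1) + 1)) (chain α h i N ((k - 1) + 1) (Λ i0))
        * h (i t) (α (i ((k - 1) + 1))) = h (i t) (α (i k)) := by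
      rw [← hk', hCkΛ]; ring
    rw [e4]
    have e5 : h (i t) μ = h (i t) (Λ i0) - h (i t) (α i0) := by
      rw [hμΛ, map_sub]
    rw [e5]
    have T2' : ∑ l ∈ Finset.Ico k N,
        h (i (l + 1)) (chain α h i N (l + 1) (α i0)) * h (i t) (α (i (l + 1)))
        = h (i t) (α i0) - h (i t) (α (i k)) := by linarith
    rw [T2']
    ring
  · -- t = k
    subst heq
    rw [hb0 t, if_pos rfl, hdk t, if_pos rfl]
    have T := telescope α h i N (h (i t)) μ (N - t) t (by omega)
    have e1 : ∀ l ∈ Finset.Ico t N,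
        b0 (l + 1) * h (i t) (α (i (l + 1))) =
        h (i (l + 1)) (chain α h i N (l + 1) μ) * h (i t) (α (i (l + 1))) := by
      intro l hl
      have hl' := Finset.mem_Ico.mp hl
      rw [hb0 (l + 1), if_neg (by omega), if_pos (by omega)]
    rw [Finset.sum_congr rfl e1]
    rw [hCkμ] at T
    linarith
  · -- k < t
    rw [hb0 t, if_neg (by omega), if_pos hgt, hdk t, if_neg (by omega)]
    rw [telescope α h i N (h (i t)) μ (N - t) t (by omega)]
    have e1 : ∀ l ∈ Finset.Ico t N,
        b0 (l + 1) * h (i t) (α (i (l + 1))) =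
        h (i (l + 1)) (chain α h i N (l + 1) μ) * h (i t) (α (i (l + 1))) := by
      intro l hl
      have hl' := Finset.mem_Ico.mp hl
      rw [hb0 (l + 1), if_neg (by omega), if_pos (by omega)]
    rw [Finset.sum_congr rfl e1]
    ring

end Stmt18
end
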